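/- Moment generating function identity for the Ehrenfest transition probabilities (proof of Theorem 3.3(a)): for every i ∈ {0,1,…,N}, every t ≥ 0 and every real z, Σ_{j=0}^{N} p_{ij}(t) · z^j = [q + p·z − q·(1−z)·e^{−λ(α+β)t}]^i · [q + p·z + p·(1−z)·e^{−λ(α+β)t}]^{N−i}. -/

import Mathlib

/-!
Expanding `K_m(x)` in the basis `C(x,k)` and using the factorial moments
`∑ₓ C(N,x) C(x,k) aˣ bᴺ⁻ˣ = C(N,k) aᵏ (a+b)ᴺ⁻ᵏ` of the binomial distribution gives the generating
function `∑ₓ C(N,x) K_m(x) aˣ bᴺ⁻ˣ = (a+b)ᴺ⁻ᵐ (a+b-a/p)ᵐ`. Summing `p_{ij}(t) zʲ` over `j` first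
(after the duality `K_j(x) = K_x(j)`) and then over `x` applies this identity twice.
-/

open Finset

/-- The Krawtchouk polynomial `K_l(x; N; p)`, defined via the hypergeometric sum. -/
noncomputable def krawtchouk (N : ℕ) (p : ℝ) (l x : ℕ) : ℝ :=
  ∑ k ∈ Finset.range (N + 1),
    ((ascPochhammer ℝ k).eval (-(l : ℝ)) * (ascPochhammer ℝ k).eval (-(x : ℝ))) /
      ((ascPochhammer ℝ k).eval (-(N : ℝ)) * (Nat.factorial k : ℝ)) * (1 / p) ^ k

/-- Transition probabilities `p_{ij}(t)` of the continuous-time Ehrenfest process,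
where `p = α/(α+β)` and `q = 1 - p`. -/
noncomputable def ehrenfestP (N : ℕ) (p q lam α β : ℝ) (i j : ℕ) (t : ℝ) : ℝ :=
  (N.choose j : ℝ) * (p / q) ^ j *
    ∑ x ∈ Finset.range (N + 1),
      (N.choose x : ℝ) * p ^ x * q ^ (N - x) * krawtchouk N p i x * krawtchouk N p j x *
        Real.exp (-(lam * (α + β) * (x : ℝ) * t))

theorem ascPochhammer_eval_neg_natCast {R : Type*} [Ring R] (n k : ℕ) :
    (ascPochhammer R k).eval (-(n : R)) = (-1) ^ k * n.descFactorial k := by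
  rw [ascPochhammer_eval_neg_eq_descPochhammer, descPochhammer_eval_eq_descFactorial]

theorem krawtchouk_eq_sum_choose (N : ℕ) (p : ℝ) (l x : ℕ) :
    krawtchouk N p l x = ∑ k ∈ range (N + 1),
      (-1) ^ k * (l.choose k * x.choose k / N.choose k) * (1 / p) ^ k := by
  refine sum_congr rfl fun k hk => ?_
  have hNk : (N.choose k : ℝ) ≠ 0 := by
    exact_mod_cast (Nat.choose_pos (Nat.lt_succ_iff.mp (mem_range.mp hk))).ne'
  simp only [ascPochhammer_eval_neg_natCast, Nat.descFactorial_eq_factorial_mul_choose,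
    Nat.cast_mul]
  field_simp

theorem krawtchouk_comm (N : ℕ) (p : ℝ) (l x : ℕ) :
    krawtchouk N p l x = krawtchouk N p x l :=
  sum_congr rfl fun _ _ => by ring

theorem sum_range_choose_mul_choose_mul_pow {R : Type*} [CommSemiring R] (N k : ℕ) (a b : R) :
    ∑ x ∈ range (N + 1), (N.choose x * x.choose k : R) * a ^ x * b ^ (N - x) =
      N.choose k * a ^ k * (a + b) ^ (N - k) := by
  rcases lt_or_ge N k with hNk | hkN
  · rw [Nat.choose_eq_zero_of_lt hNk, Nat.cast_zero, zero_mul, zero_mul]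
    refine sum_eq_zero fun x hx => ?_
    rw [Nat.choose_eq_zero_of_lt (n := x) (by have := mem_range.mp hx; omega)]
    simp
  obtain ⟨n, rfl⟩ := Nat.exists_eq_add_of_le hkN
  have hlow : ∑ x ∈ range k, ((k + n).choose x * x.choose k : R) * a ^ x * b ^ (k + n - x) = 0 :=
    sum_eq_zero fun x hx => by rw [Nat.choose_eq_zero_of_lt (mem_range.mp hx)]; simp
  rw [show k + n + 1 = k + (n + 1) by ring, sum_range_add, hlow, zero_add,
    Nat.add_sub_cancel_left, add_pow, mul_sum]
  refine sum_congr rfl fun i hi => ?_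
  have hchoose := Nat.choose_mul (n := k + n) (k := k + i) (s := k) (Nat.le_add_right k i)
  rw [Nat.add_sub_cancel_left, Nat.add_sub_cancel_left] at hchoose
  rw [← Nat.cast_mul, hchoose, Nat.cast_mul, Nat.add_sub_add_left, pow_add]
  ring

theorem sum_range_choose_mul_krawtchouk_mul_pow {N m : ℕ} (hm : m ≤ N) (p a b : ℝ) :
    ∑ x ∈ range (N + 1), N.choose x * krawtchouk N p m x * a ^ x * b ^ (N - x) =
      (a + b) ^ (N - m) * (a + b - a / p) ^ m := by
  calc ∑ x ∈ range (N + 1), N.choose x * krawtchouk N p m x * a ^ x * b ^ (N - x)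
      = ∑ x ∈ range (N + 1), ∑ k ∈ range (N + 1), (-1) ^ k * (m.choose k / N.choose k) *
          (1 / p) ^ k * ((N.choose x * x.choose k : ℝ) * a ^ x * b ^ (N - x)) := by
        simp only [krawtchouk_eq_sum_choose, mul_sum, sum_mul]
        exact sum_congr rfl fun x _ => sum_congr rfl fun k _ => by ring
    _ = ∑ k ∈ range (N + 1), (-1) ^ k * (m.choose k / N.choose k) * (1 / p) ^ k *
          (N.choose k * a ^ k * (a + b) ^ (N - k)) := by
        rw [sum_comm]
        simp only [← mul_sum, sum_range_choose_mul_choose_mul_pow]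
    _ = ∑ k ∈ range (N + 1), (-(a / p)) ^ k * (a + b) ^ (N - k) * m.choose k := by
        refine sum_congr rfl fun k hk => ?_
        have hNk : (N.choose k : ℝ) ≠ 0 := by
          exact_mod_cast (Nat.choose_pos (Nat.lt_succ_iff.mp (mem_range.mp hk))).ne'
        field_simp
        ring
    _ = ∑ k ∈ range (m + 1), (-(a / p)) ^ k * (a + b) ^ (N - k) * m.choose k := by
        refine (sum_subset (range_subset_range.mpr (by omega)) fun k _ hk => ?_).symm
        rw [Nat.choose_eq_zero_of_lt (by simpa using hk), Nat.cast_zero, mul_zero]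
    _ = (a + b) ^ (N - m) *
          ∑ k ∈ range (m + 1), (-(a / p)) ^ k * (a + b) ^ (m - k) * m.choose k := by
        rw [mul_sum]
        refine sum_congr rfl fun k hk => ?_
        rw [show N - k = N - m + (m - k) by have := mem_range.mp hk; omega, pow_add]
        ring
    _ = (a + b) ^ (N - m) * (a + b - a / p) ^ m := by
        rw [← add_pow, neg_add_eq_sub, sub_eq_neg_add, add_comm]

theorem pow_mul_sum_range_choose_mul_krawtchouk_mul_pow {N x : ℕ} (hx : x ≤ N) {p q : ℝ}
    (hp : p ≠ 0) (hq : q ≠ 0) (hpq : p + q = 1) (z : ℝ) :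
    q ^ (N - x) * ∑ j ∈ range (N + 1), N.choose j * krawtchouk N p j x * (p / q * z) ^ j =
      (p * z + q) ^ (N - x) * (1 - z) ^ x := by
  have h := sum_range_choose_mul_krawtchouk_mul_pow hx p (p / q * z) 1
  simp only [one_pow, mul_one, krawtchouk_comm N p x] at h
  rw [h, ← mul_assoc, ← mul_pow]
  have hq' : q = 1 - p := by linarith
  congr 2
  · field_simp
  · subst hq'; field_simp; ring

theorem sum_ehrenfestP_mul_pow {N i : ℕ} (hi : i ≤ N) {p q : ℝ} (hp : p ≠ 0) (hq : q ≠ 0)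
    (hpq : p + q = 1) (lam α β t z : ℝ) :
    ∑ j ∈ range (N + 1), ehrenfestP N p q lam α β i j t * z ^ j =
      (q + p * z - q * (1 - z) * Real.exp (-(lam * (α + β) * t))) ^ i *
        (q + p * z + p * (1 - z) * Real.exp (-(lam * (α + β) * t))) ^ (N - i) := by
  set s := Real.exp (-(lam * (α + β) * t))
  have hexp (x : ℕ) : Real.exp (-(lam * (α + β) * x * t)) = s ^ x := by
    rw [← Real.exp_nat_mul]
    ring_nf
  calc ∑ j ∈ range (N + 1), ehrenfestP N p q lam α β i j t * z ^ j
      = ∑ x ∈ range (N + 1), N.choose x * p ^ x * krawtchouk N p i x * s ^ x *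
          (q ^ (N - x) *
            ∑ j ∈ range (N + 1), N.choose j * krawtchouk N p j x * (p / q * z) ^ j) := by
        simp only [ehrenfestP, mul_sum, sum_mul, hexp]
        rw [sum_comm]
        exact sum_congr rfl fun x _ => sum_congr rfl fun j _ => by ring
    _ = ∑ x ∈ range (N + 1), N.choose x * krawtchouk N p i x * (p * s * (1 - z)) ^ x *
          (p * z + q) ^ (N - x) := by
        refine sum_congr rfl fun x hx => ?_
        rw [pow_mul_sum_range_choose_mul_krawtchouk_mul_pow
          (Nat.lt_succ_iff.mp (mem_range.mp hx)) hp hq hpq, mul_pow, mul_pow]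
        ring
    _ = _ := by
        rw [sum_range_choose_mul_krawtchouk_mul_pow hi, mul_comm]
        congr 2
        · field_simp
          linear_combination (s * (1 - z)) * hpq
        · ring

theorem ehrenfest_mgf_general (N : ℕ) (lam α β : ℝ)
    (hα : α ∈ Set.Ioc (0 : ℝ) 1) (hβ : β ∈ Set.Ioc (0 : ℝ) 1)
    (p q : ℝ) (hp : p = α / (α + β)) (hq : q = 1 - p)
    (i : ℕ) (hi : i ≤ N) (t : ℝ) (z : ℝ) :
    ∑ j ∈ Finset.range (N + 1), ehrenfestP N p q lam α β i j t * z ^ j =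
      (q + p * z - q * (1 - z) * Real.exp (-(lam * (α + β) * t))) ^ i *
        (q + p * z + p * (1 - z) * Real.exp (-(lam * (α + β) * t))) ^ (N - i) := by
  have hαβ : 0 < α + β := add_pos hα.1 hβ.1
  have hq' : q = β / (α + β) := by
    rw [hq, hp]
    field_simp
    ring
  refine sum_ehrenfestP_mul_pow hi ?_ ?_ (by rw [hq]; ring) lam α β t z
  · rw [hp]
    exact (div_pos hα.1 hαβ).ne'
  · rw [hq']
    exact (div_pos hβ.1 hαβ).ne'

/-- Moment generating function identity for the Ehrenfest transition probabilities. -/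
theorem ehrenfest_mgf (N : ℕ) (lam α β : ℝ) (hlam : 0 < lam)
    (hα : α ∈ Set.Ioc (0 : ℝ) 1) (hβ : β ∈ Set.Ioc (0 : ℝ) 1)
    (p q : ℝ) (hp : p = α / (α + β)) (hq : q = 1 - p)
    (i : ℕ) (hi : i ≤ N) (t : ℝ) (ht : 0 ≤ t) (z : ℝ) :
    ∑ j ∈ Finset.range (N + 1), ehrenfestP N p q lam α β i j t * z ^ j =
      (q + p * z - q * (1 - z) * Real.exp (-(lam * (α + β) * t))) ^ i *
        (q + p * z + p * (1 - z) * Real.exp (-(lam * (α + β) * t))) ^ (N - i) :=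
  ehrenfest_mgf_general N lam α β hα hβ p q hp hq i hi t z
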